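/- Let X and Y be topological spaces, let π : X → Y be a continuous closed map, and let f : X → EReal be a lower semicontinuous function (with values in the extended real numbers). Define g : Y → EReal by g(y) = ⨅_{x ∈ π⁻¹(y)} f(x), where the infimum over an empty fiber is ⊤. Then g is lower semicontinuous. -/

import Mathlib

/-!
Given `c < g y`, pick `d` with `c < d < g y`. Every value of `f` on the fiber over `y` exceeds
`d`, so `y` lies outside the image of the closed sublevel set `{f ≤ d}`. That image is closed
because `π` is a closed map, so on its open complement every fiber still carries only values
above `d`, and the fiberwise infimum is `≥ d > c`.
-/

open Set

section

variable {X Y α : Type*} [TopologicalSpace X] [TopologicalSpace Y] {π : X → Y} {f : X → α}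

theorem IsClosedMap.isOpen_setOf_forall_fiber_lt [LinearOrder α] (hπ : IsClosedMap π)
    (hf : LowerSemicontinuous f) (d : α) :
    IsOpen {y | ∀ x ∈ π ⁻¹' {y}, d < f x} := by
  have h : {y | ∀ x ∈ π ⁻¹' {y}, d < f x} = (π '' (f ⁻¹' Iic d))ᶜ := by
    ext y
    simp [imp_not_comm, not_le]
  rw [h]
  exact (hπ _ (hf.isClosed_preimage d)).isOpen_compl

theorem IsClosedMap.lowerSemicontinuous_biInf_fiber [CompleteLinearOrder α] [DenselyOrdered α]
    (hπ : IsClosedMap π) (hf : LowerSemicontinuous f) :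
    LowerSemicontinuous (fun y => ⨅ x ∈ π ⁻¹' {y}, f x) := by
  intro y c hc
  obtain ⟨d, hcd, hd⟩ := exists_between hc
  have hy : ∀ x ∈ π ⁻¹' {y}, d < f x := fun x hx => hd.trans_le (biInf_le f hx)
  filter_upwards [(hπ.isOpen_setOf_forall_fiber_lt hf d).mem_nhds hy] with z hz
  exact hcd.trans_le (le_iInf₂ fun x hx => (hz x hx).le)

end

theorem lsc_ereal_descends_along_closed_map_general
    {X Y : Type*} [TopologicalSpace X] [TopologicalSpace Y]
    (π : X → Y) (hclosed : IsClosedMap π)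
    (f : X → EReal) (hf : LowerSemicontinuous f) :
    LowerSemicontinuous (fun y => ⨅ x ∈ π ⁻¹' {y}, f x) :=
  hclosed.lowerSemicontinuous_biInf_fiber hf

/-- If `π : X → Y` is a continuous closed map and `f : X → EReal` is
lower semicontinuous, then the fiberwise infimum
`g y = ⨅ x ∈ π⁻¹(y), f x` (which is `⊤` on empty fibers) is
lower semicontinuous. -/
theorem lsc_ereal_descends_along_closed_map
    {X Y : Type*} [TopologicalSpace X] [TopologicalSpace Y]
    (π : X → Y) (hcont : Continuous π) (hclosed : IsClosedMap π)
    (f : X → EReal) (hf : LowerSemicontinuous f) :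
    LowerSemicontinuous (fun y => ⨅ x ∈ π ⁻¹' {y}, f x) :=
  lsc_ereal_descends_along_closed_map_general π hclosed f hf
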